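/- Let Y_1, …, Y_N be independent with Y_i ~ Poisson(μ_{0i}), μ_{0i} > 0, let Y* = (Y*_1, …, Y*_N) be an independent replicate with the same means, and let ŷ_i : ℕ^N → [c, C] with 0 < c ≤ C < ∞ be fitted-value functions. Define cAI = −2 E_Y E_{Y*}[∑_i (−ŷ_i(Y) + Y*_i log ŷ_i(Y) − log(Y*_i !))]. Then cAI = −2 E_Y[∑_i (−ŷ_i(Y) + Y_i log ŷ_i(Y) − log(Y_i !))] + 2 E_Y[∑_i (Y_i log ŷ_i(Y) − Y_i log ŷ_i(Y^{(Y_i−1)}))], where Y^{(Y_i−1)} replaces the i-th coordinate of Y by Y_i − 1 and terms with Y_i = 0 vanish. -/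

import Mathlib

open scoped BigOperators

noncomputable def poissonPMF (μ : ℝ) (k : ℕ) : ℝ :=
  Real.exp (-μ) * μ ^ k / (Nat.factorial k)

noncomputable def poissonWeight {N : ℕ} (μ : Fin N → ℝ) (y : Fin N → ℕ) : ℝ :=
  ∏ i, poissonPMF (μ i) (y i)

/-
The key fact is Hudson's identity for independent Poisson counts,
`E[Y_i g(Y^{(Y_i-1)})] = μ_i E[g(Y)]`: the shift `y ↦ y + e_i` is a bijection onto `{y_i ≠ 0}`
and `(k + 1) p_μ(k + 1) = μ p_μ(k)`. With `g = log ŷ_i` it evaluates the expected penalty as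
`E[Y_i log ŷ_i(Y)] - μ_i E[log ŷ_i(Y)]`, while averaging over the replicate `Y*` replaces `Y*_i`
by `μ_i`. Hence both sides equal `-2 ∑_i (-E ŷ_i(Y) + μ_i E log ŷ_i(Y) - E log Y_i!)`.
-/

open Finset Function Real
open scoped Nat

lemma hasSum_pi_prod_of_nonneg {β : Type*} {n : ℕ} (f : Fin n → β → ℝ) {s : Fin n → ℝ}
    (hf0 : ∀ j, 0 ≤ f j) (hf : ∀ j, HasSum (f j) (s j)) :
    HasSum (fun y : Fin n → β => ∏ j, f j (y j)) (∏ j, s j) := by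
  induction n with
  | zero => simp
  | succ n ih =>
    set g : (Fin n → β) → ℝ := fun z => ∏ j : Fin n, f j.succ (z j)
    have hg : HasSum g (∏ j : Fin n, s j.succ) :=
      ih (fun j => f j.succ) (fun j => hf0 j.succ) (fun j => hf j.succ)
    have hg0 : 0 ≤ g := fun z => prod_nonneg fun j _ => hf0 j.succ (z j)
    have hprod := (hf 0).mul hg <|
      Summable.mul_of_nonneg (f := f 0) (g := g) (hf 0).summable hg.summable (hf0 0) hg0
    rw [Fin.prod_univ_succ]
    refine (Fin.consEquiv fun _ => β).hasSum_iff.mp (hprod.congr_fun fun p => ?_)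
    simp [g, Fin.prod_univ_succ, Fin.consEquiv]

lemma hasSum_sum_mul {ι α R : Type*} [NonUnitalNonAssocSemiring R] [TopologicalSpace R]
    [ContinuousAdd R] {s : Finset ι} {f : ι → α → R} {w : α → R} {a : ι → R}
    (h : ∀ i ∈ s, HasSum (fun y => f i y * w y) (a i)) :
    HasSum (fun y => (∑ i ∈ s, f i y) * w y) (∑ i ∈ s, a i) := by
  simpa only [sum_mul] using hasSum_sum h

lemma summable_mul_of_abs_le {α : Type*} {f w : α → ℝ} {M : ℝ} (hf : ∀ a, |f a| ≤ M)
    (hw : Summable w) (hw0 : 0 ≤ w) : Summable fun a => f a * w a :=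
  .of_norm_bounded (hw.mul_left M) fun a => by
    rw [norm_mul, Real.norm_eq_abs, Real.norm_of_nonneg (hw0 a)]
    exact mul_le_mul_of_nonneg_right (hf a) (hw0 a)

lemma Real.log_factorial_le (k : ℕ) : log k ! ≤ k * ((k - 1 : ℕ) : ℝ) := by
  rcases k with _ | k
  · simp
  calc log (k + 1)! ≤ log (((k + 1 : ℕ) : ℝ) ^ (k + 1)) :=
        log_le_log (by positivity) (by exact_mod_cast Nat.factorial_le_pow _)
    _ = (k + 1 : ℕ) * log (k + 1 : ℕ) := log_pow _ _
    _ ≤ (k + 1 : ℕ) * ((k + 1 - 1 : ℕ) : ℝ) := by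
        gcongr
        have := log_le_sub_one_of_pos (x := (k + 1 : ℕ)) (by positivity)
        push_cast at this ⊢
        linarith

lemma poissonPMF_nonneg {μ : ℝ} (hμ : 0 ≤ μ) (k : ℕ) : 0 ≤ poissonPMF μ k := by
  unfold poissonPMF; positivity

lemma hasSum_poissonPMF {μ : ℝ} (hμ : 0 ≤ μ) : HasSum (poissonPMF μ) 1 :=
  ProbabilityTheory.hasSum_one_poissonMeasure ⟨μ, hμ⟩

lemma succ_mul_poissonPMF_succ (μ : ℝ) (k : ℕ) :
    ((k + 1 : ℕ) : ℝ) * poissonPMF μ (k + 1) = μ * poissonPMF μ k := by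
  unfold poissonPMF
  rw [Nat.factorial_succ]
  push_cast
  field_simp
  ring

section poissonWeight

variable {N : ℕ} {μ : Fin N → ℝ}

lemma poissonWeight_update (y : Fin N → ℕ) (i : Fin N) (k : ℕ) :
    poissonWeight μ (update y i k) =
      poissonPMF (μ i) k * ∏ j ∈ univ.erase i, poissonPMF (μ j) (y j) := by
  rw [poissonWeight, ← mul_prod_erase univ _ (mem_univ i), update_self]
  congr 1
  refine prod_congr rfl fun j hj => ?_
  rw [update_of_ne (ne_of_mem_erase hj)]

lemma succ_mul_poissonWeight_update_succ (y : Fin N → ℕ) (i : Fin N) :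
    ((y i + 1 : ℕ) : ℝ) * poissonWeight μ (update y i (y i + 1)) = μ i * poissonWeight μ y := by
  conv_rhs => rw [← update_eq_self i y, poissonWeight_update]
  rw [poissonWeight_update, ← mul_assoc, succ_mul_poissonPMF_succ, mul_assoc]

lemma hasSum_coord_mul_update_pred {g : (Fin N → ℕ) → ℝ} {s : ℝ} (i : Fin N)
    (hg : HasSum (fun y => g y * poissonWeight μ y) s) :
    HasSum (fun y => (y i : ℝ) * g (update y i (y i - 1)) * poissonWeight μ y) (μ i * s) := by
  have hinj : Injective fun y : Fin N → ℕ => update y i (y i + 1) := by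
    intro y z hyz
    have hi : y i = z i := by simpa using congr_fun hyz i
    funext j
    by_cases hj : j = i
    · rwa [hj]
    · simpa [update_of_ne hj] using congr_fun hyz j
  refine (hinj.hasSum_iff fun y hy => ?_).mp ((hg.mul_left (μ i)).congr_fun fun y => ?_)
  · have hyi : y i = 0 := by
      by_contra h
      exact hy ⟨update y i (y i - 1), by simp [Nat.sub_add_cancel (Nat.pos_of_ne_zero h)]⟩
    simp [hyi]
  · simp only [comp_apply, update_self, update_idem, Nat.add_sub_cancel, update_eq_self]
    rw [mul_right_comm, succ_mul_poissonWeight_update_succ]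
    ring

variable (hμ : ∀ j, 0 ≤ μ j)
include hμ

lemma poissonWeight_nonneg : 0 ≤ poissonWeight μ :=
  fun y => prod_nonneg fun j _ => poissonPMF_nonneg (hμ j) (y j)

lemma hasSum_poissonWeight : HasSum (poissonWeight μ) 1 := by
  have h := hasSum_pi_prod_of_nonneg (fun j => poissonPMF (μ j))
    (fun j => poissonPMF_nonneg (hμ j)) (fun j => hasSum_poissonPMF (hμ j))
  rwa [prod_const_one] at h

lemma summable_mul_poissonWeight_of_abs_le {f : (Fin N → ℕ) → ℝ} {M : ℝ} (hf : ∀ y, |f y| ≤ M) :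
    Summable fun y => f y * poissonWeight μ y :=
  summable_mul_of_abs_le hf (hasSum_poissonWeight hμ).summable (poissonWeight_nonneg hμ)

lemma hasSum_coord_mul_poissonWeight (i : Fin N) :
    HasSum (fun y => (y i : ℝ) * poissonWeight μ y) (μ i) := by
  have h := hasSum_coord_mul_update_pred (g := fun _ => 1) i
    ((hasSum_poissonWeight hμ).congr_fun fun y => one_mul _)
  simpa only [one_mul, mul_one] using h

lemma summable_log_factorial_coord_mul_poissonWeight (i : Fin N) :
    Summable fun y => log (y i)! * poissonWeight μ y := by
  have hfact := hasSum_coord_mul_update_pred i (hasSum_coord_mul_poissonWeight hμ i)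
  refine .of_nonneg_of_le (fun y => mul_nonneg (log_nonneg ?_) (poissonWeight_nonneg hμ y))
    (fun y => ?_) hfact.summable
  · exact_mod_cast (y i).factorial_pos
  · simp only [update_self]
    exact mul_le_mul_of_nonneg_right (log_factorial_le _) (poissonWeight_nonneg hμ y)

end poissonWeight

section expectations

variable {N : ℕ} {μ : Fin N → ℝ} (hμ : ∀ j, 0 ≤ μ j) {h L : (Fin N → ℕ) → ℝ} {C M : ℝ}
include hμ

lemma hasSum_neg_add_mul_sub_mul_poissonWeight (hh : ∀ y, |h y| ≤ C) (hL : ∀ y, |L y| ≤ M)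
    (m l : ℝ) :
    HasSum (fun y => (-h y + m * L y - l) * poissonWeight μ y)
      (-∑' y, h y * poissonWeight μ y + m * ∑' y, L y * poissonWeight μ y - l) := by
  have h' := (((summable_mul_poissonWeight_of_abs_le hμ hh).hasSum.neg).add
    ((summable_mul_poissonWeight_of_abs_le hμ hL).hasSum.mul_left m)).sub
    ((hasSum_poissonWeight hμ).mul_left l)
  rw [mul_one] at h'
  exact h'.congr_fun fun y => by ring

variable (i : Fin N)

lemma hasSum_affine_coord_sub_log_factorial (a b : ℝ) :
    HasSum (fun y => (a + (y i : ℝ) * b - log (y i)!) * poissonWeight μ y)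
      (a + μ i * b - ∑' y, log (y i)! * poissonWeight μ y) := by
  have h' := (((hasSum_poissonWeight hμ).mul_left a).add
    ((hasSum_coord_mul_poissonWeight hμ i).mul_right b)).sub
    (summable_log_factorial_coord_mul_poissonWeight hμ i).hasSum
  rw [mul_one] at h'
  exact h'.congr_fun fun y => by ring

lemma summable_coord_mul_mul_poissonWeight (hL : ∀ y, |L y| ≤ M) :
    Summable fun y => (y i : ℝ) * L y * poissonWeight μ y :=
  (summable_mul_of_abs_le hL (hasSum_coord_mul_poissonWeight hμ i).summable
    fun y => mul_nonneg (Nat.cast_nonneg _) (poissonWeight_nonneg hμ y)).congr fun y => by ring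

lemma hasSum_neg_add_coord_mul_sub_log_factorial (hh : ∀ y, |h y| ≤ C) (hL : ∀ y, |L y| ≤ M) :
    HasSum (fun y => (-h y + (y i : ℝ) * L y - log (y i)!) * poissonWeight μ y)
      (-∑' y, h y * poissonWeight μ y + ∑' y, (y i : ℝ) * L y * poissonWeight μ y
        - ∑' y, log (y i)! * poissonWeight μ y) := by
  have h' := ((summable_mul_poissonWeight_of_abs_le hμ hh).hasSum.neg.add
    (summable_coord_mul_mul_poissonWeight hμ i hL).hasSum).sub
    (summable_log_factorial_coord_mul_poissonWeight hμ i).hasSum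
  exact h'.congr_fun fun y => by ring

lemma hasSum_coord_mul_sub_coord_mul_update_pred (hL : ∀ y, |L y| ≤ M) :
    HasSum (fun y =>
        ((y i : ℝ) * L y - (y i : ℝ) * L (update y i (y i - 1))) * poissonWeight μ y)
      (∑' y, (y i : ℝ) * L y * poissonWeight μ y - μ i * ∑' y, L y * poissonWeight μ y) := by
  have hstein :=
    hasSum_coord_mul_update_pred i (summable_mul_poissonWeight_of_abs_le hμ hL).hasSum
  exact ((summable_coord_mul_mul_poissonWeight hμ i hL).hasSum.sub hstein).congr_fun
    fun y => by ring

end expectations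

theorem conditional_AIC_unbiased_general {N : ℕ} (μ₀ : Fin N → ℝ) (hμ : ∀ i, 0 < μ₀ i)
    (yhat : Fin N → (Fin N → ℕ) → ℝ) (c C : ℝ) (hc : 0 < c)
    (hbdd : ∀ i y, c ≤ yhat i y ∧ yhat i y ≤ C) :
    -2 * ∑' y : Fin N → ℕ,
        (∑' ystar : Fin N → ℕ,
            (∑ i, (-(yhat i y) + (ystar i : ℝ) * Real.log (yhat i y)
              - Real.log (Nat.factorial (ystar i)))) * poissonWeight μ₀ ystar) *
          poissonWeight μ₀ y
      = -2 * (∑' y : Fin N → ℕ,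
            (∑ i, (-(yhat i y) + (y i : ℝ) * Real.log (yhat i y)
              - Real.log (Nat.factorial (y i)))) * poissonWeight μ₀ y)
        + 2 * ∑' y : Fin N → ℕ,
            (∑ i, ((y i : ℝ) * Real.log (yhat i y)
              - (y i : ℝ) * Real.log (yhat i (Function.update y i (y i - 1))))) *
              poissonWeight μ₀ y := by
  have hμ₀ : ∀ i, 0 ≤ μ₀ i := fun i => (hμ i).le
  have hyhat : ∀ i y, |yhat i y| ≤ max |c| |C| := fun i y =>
    abs_le_max_abs_abs (hbdd i y).1 (hbdd i y).2
  have hlog : ∀ i y, |log (yhat i y)| ≤ max |log c| |log C| := fun i y =>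
    abs_le_max_abs_abs (log_le_log hc (hbdd i y).1)
      (log_le_log (hc.trans_le (hbdd i y).1) (hbdd i y).2)
  rw [tsum_congr fun y => congrArg (· * poissonWeight μ₀ y) (hasSum_sum_mul fun i _ =>
      hasSum_affine_coord_sub_log_factorial hμ₀ i (-(yhat i y)) (log (yhat i y))).tsum_eq,
    (hasSum_sum_mul fun i _ => hasSum_neg_add_mul_sub_mul_poissonWeight hμ₀ (h := yhat i)
      (L := fun y => log (yhat i y)) (hyhat i) (hlog i) _ _).tsum_eq,
    (hasSum_sum_mul fun i _ => hasSum_neg_add_coord_mul_sub_log_factorial hμ₀ i (h := yhat i)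
      (L := fun y => log (yhat i y)) (hyhat i) (hlog i)).tsum_eq,
    (hasSum_sum_mul fun i _ => hasSum_coord_mul_sub_coord_mul_update_pred hμ₀ i
      (L := fun y => log (yhat i y)) (hlog i)).tsum_eq]
  simp only [sum_add_distrib, sum_sub_distrib, sum_neg_distrib]
  ring

theorem conditional_AIC_unbiased {N : ℕ} (μ₀ : Fin N → ℝ) (hμ : ∀ i, 0 < μ₀ i)
    (yhat : Fin N → (Fin N → ℕ) → ℝ) (c C : ℝ) (hc : 0 < c) (hcC : c ≤ C)
    (hbdd : ∀ i y, c ≤ yhat i y ∧ yhat i y ≤ C) :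
    -2 * ∑' y : Fin N → ℕ,
        (∑' ystar : Fin N → ℕ,
            (∑ i, (-(yhat i y) + (ystar i : ℝ) * Real.log (yhat i y)
              - Real.log (Nat.factorial (ystar i)))) * poissonWeight μ₀ ystar) *
          poissonWeight μ₀ y
      = -2 * (∑' y : Fin N → ℕ,
            (∑ i, (-(yhat i y) + (y i : ℝ) * Real.log (yhat i y)
              - Real.log (Nat.factorial (y i)))) * poissonWeight μ₀ y)
        + 2 * ∑' y : Fin N → ℕ,
            (∑ i, ((y i : ℝ) * Real.log (yhat i y)
              - (y i : ℝ) * Real.log (yhat i (Function.update y i (y i - 1))))) *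
              poissonWeight μ₀ y :=
  conditional_AIC_unbiased_general μ₀ hμ yhat c C hc hbdd
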